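/- arXiv:0901.4755 — 6 statements merged into one kernel-verified Lean document; each statement's English description precedes it below -/
import Mathlib

section
/- Let k be a commutative ring, g a Lie algebra over k that is finitely presented as a k-module, and R a commutative k-algebra that is flat as a k-module. Then the canonical R-linear map Ctd_k(g) ⊗_k R → Ctd_R(g ⊗_k R), which sends χ ⊗ r to the endomorphism r • (χ ⊗ id_R) of the base-changed Lie algebra g ⊗_k R, is bijective (an isomorphism of R-modules, and in fact of R-algebras). -/
/-!
The first centroid identity `χ ⁅x, y⁆ = ⁅χ x, y⁆` implies the second by antisymmetry, so the
centroid is the kernel of the `k`-linear defect map `D : End_k g → Hom_k(g, End_k g)`,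
`D χ x = χ ∘ ad x - ad (χ x)`. Because `g` is finitely presented and `R` is flat, the comparison
maps `R ⊗ Hom_k(g, N) → Hom_R(R ⊗ g, R ⊗ N)` are isomorphisms, and they carry `R ⊗ D` to the
defect map of the `R`-Lie algebra `R ⊗ g`. Flat base change preserves kernels, hence
`R ⊗ Ctd_k(g) = R ⊗ ker D ≅ ker D_R = Ctd_R(R ⊗ g)`.
-/

open TensorProduct

/-- The centroid of a Lie algebra `g` over `k`: the `k`-submodule of `End_k(g)`
consisting of the `χ` with `χ ⁅x, y⁆ = ⁅χ x, y⁆ = ⁅x, χ y⁆` for all `x, y`. -/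
def lieCentroid (k g : Type*) [CommRing k] [LieRing g] [LieAlgebra k g] :
    Submodule k (g →ₗ[k] g) where
  carrier := {χ | ∀ x y : g, χ ⁅x, y⁆ = ⁅χ x, y⁆ ∧ χ ⁅x, y⁆ = ⁅x, χ y⁆}
  add_mem' := by
    intro χ ψ hχ hψ x y
    constructor
    · simp only [LinearMap.add_apply, add_lie]
      rw [(hχ x y).1, (hψ x y).1]
    · simp only [LinearMap.add_apply, lie_add]
      rw [(hχ x y).2, (hψ x y).2]
  zero_mem' := by intro x y; simp
  smul_mem' := by
    intro c χ hχ x y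
    constructor
    · simp only [LinearMap.smul_apply, smul_lie]
      rw [(hχ x y).1]
    · simp only [LinearMap.smul_apply, lie_smul]
      rw [(hχ x y).2]

theorem LinearMap.tensorProduct_bijective (k R M N : Type*) [CommRing k] [CommRing R]
    [Algebra k R] [AddCommGroup M] [Module k M] [AddCommGroup N] [Module k N]
    [Module.Flat k R] [Module.FinitePresentation k M] :
    Function.Bijective (LinearMap.tensorProduct k R M N) := by
  have h := Module.FinitePresentation.isBaseChange_map k M N R
  suffices LinearMap.tensorProduct k R M N = h.equiv.toLinearMap by
    rw [this]; exact h.equiv.bijective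
  exact TensorProduct.AlgebraTensorModule.ext fun r χ ↦ by
    simp [LinearMap.tensorProduct, h.equiv_tmul]

theorem Module.Flat.range_comp_baseChange_ker_subtype_eq_ker {k R A B A' B' : Type*}
    [CommRing k] [CommRing R] [Algebra k R] [Module.Flat k R]
    [AddCommGroup A] [Module k A] [AddCommGroup B] [Module k B]
    [AddCommGroup A'] [Module R A'] [AddCommGroup B'] [Module R B']
    {D : A →ₗ[k] B} {D' : A' →ₗ[R] B'} {νA : R ⊗[k] A →ₗ[R] A'} {νB : R ⊗[k] B →ₗ[R] B'}
    (hνA : Function.Surjective νA) (hνB : Function.Injective νB)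
    (h : D' ∘ₗ νA = νB ∘ₗ D.baseChange R) :
    LinearMap.range (νA ∘ₗ (LinearMap.ker D).subtype.baseChange R) = LinearMap.ker D' := by
  have hker : LinearMap.ker (D.baseChange R) =
      LinearMap.range ((LinearMap.ker D).subtype.baseChange R) :=
    Module.Flat.ker_lTensor_eq R R D
  ext f
  simp only [LinearMap.mem_range, LinearMap.mem_ker, LinearMap.comp_apply]
  constructor
  · rintro ⟨z, rfl⟩
    have hz : D.baseChange R ((LinearMap.ker D).subtype.baseChange R z) = 0 := by
      rw [← LinearMap.mem_ker, hker]
      exact LinearMap.mem_range_self _ z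
    rw [← LinearMap.comp_apply D', h, LinearMap.comp_apply, hz, map_zero]
  · intro hf
    obtain ⟨a, rfl⟩ := hνA f
    have ha : a ∈ LinearMap.ker (D.baseChange R) := by
      refine hνB ?_
      rw [map_zero, ← LinearMap.comp_apply, ← h, LinearMap.comp_apply, hf]
    rw [hker] at ha
    obtain ⟨z, rfl⟩ := ha
    exact ⟨z, rfl⟩

section Centroid

variable {k L : Type*} [CommRing k] [LieRing L] [LieAlgebra k L]

theorem mem_lieCentroid_iff (χ : Module.End k L) :
    χ ∈ lieCentroid k L ↔ ∀ x y, χ ⁅x, y⁆ = ⁅χ x, y⁆ := by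
  refine ⟨fun h x y ↦ (h x y).1, fun h x y ↦ ⟨h x y, ?_⟩⟩
  rw [← lie_skew, map_neg, h, ← lie_skew, neg_neg]

variable (k L) in
def lieCentroidDefect : Module.End k L →ₗ[k] L →ₗ[k] Module.End k L :=
  LinearMap.lcomp k _ (LieModule.toEnd k L L : L →ₗ[k] Module.End k L) ∘ₗ
      LinearMap.llcomp k L L L -
    LinearMap.llcomp k L L _ (LieModule.toEnd k L L : L →ₗ[k] Module.End k L)

@[simp]
theorem lieCentroidDefect_apply (χ : Module.End k L) (x y : L) :
    lieCentroidDefect k L χ x y = χ ⁅x, y⁆ - ⁅χ x, y⁆ := by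
  simp [lieCentroidDefect]

theorem ker_lieCentroidDefect : LinearMap.ker (lieCentroidDefect k L) = lieCentroid k L := by
  ext χ
  simp [mem_lieCentroid_iff, LinearMap.ext_iff, sub_eq_zero]

variable (R : Type*) [CommRing R] [Algebra k R]

theorem lieCentroidDefect_comp_tensorProduct :
    lieCentroidDefect R (R ⊗[k] L) ∘ₗ LinearMap.tensorProduct k R L L =
      LinearMap.compRight R (LinearMap.tensorProduct k R L L) ∘ₗ
        LinearMap.tensorProduct k R L (Module.End k L) ∘ₗ
          (lieCentroidDefect k L).baseChange R := by
  ext χ x y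
  simp [LinearMap.tensorProduct, LieAlgebra.ExtendScalars.bracket_tmul, tmul_sub]

variable [Module.Flat k R] [Module.FinitePresentation k L]

theorem injective_tensorProduct_comp_baseChange_lieCentroid_subtype :
    Function.Injective
      (LinearMap.tensorProduct k R L L ∘ₗ (lieCentroid k L).subtype.baseChange R) :=
  (LinearMap.tensorProduct_bijective k R L L).injective.comp
    (Module.Flat.lTensor_preserves_injective_linearMap _ (Submodule.injective_subtype _))

theorem range_tensorProduct_comp_baseChange_lieCentroid_subtype :
    LinearMap.range (LinearMap.tensorProduct k R L L ∘ₗ (lieCentroid k L).subtype.baseChange R) =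
      lieCentroid R (R ⊗[k] L) := by
  have hνB : Function.Injective (LinearMap.compRight R (LinearMap.tensorProduct k R L L) ∘ₗ
      LinearMap.tensorProduct k R L (Module.End k L)) := by
    rw [LinearMap.coe_comp]
    refine Function.Injective.comp (fun φ ψ h ↦ LinearMap.ext fun x ↦ ?_)
      (LinearMap.tensorProduct_bijective k R L _).injective
    exact (LinearMap.tensorProduct_bijective k R L L).injective (LinearMap.congr_fun h x)
  rw [← ker_lieCentroidDefect, ← ker_lieCentroidDefect]
  exact Module.Flat.range_comp_baseChange_ker_subtype_eq_ker
    (LinearMap.tensorProduct_bijective k R L L).surjective hνB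
    (lieCentroidDefect_comp_tensorProduct R)

end Centroid

/-- Let `k` be a commutative ring, `g` a Lie algebra over `k` that is
finitely presented as a `k`-module, and `R` a flat commutative `k`-algebra.  The
canonical map `Ctd_k(g) ⊗_k R → Ctd_R(g ⊗_k R)`, sending `χ ⊗ r` to the endomorphism
`r • (χ ⊗ id_R)` of the base change, is bijective; i.e. the induced map
`Ctd_k(g) ⊗_k R → End_R (R ⊗_k g)` is injective with image exactly the `R`-centroid
of the base-changed Lie algebra `R ⊗[k] g`. -/
theorem lieCentroid_baseChange_bijective
    (k : Type*) [CommRing k] (g : Type*) [LieRing g] [LieAlgebra k g]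
    (R : Type*) [CommRing R] [Algebra k R]
    [Module.FinitePresentation k g] [Module.Flat k R]
    -- the canonical map `Ctd_k(g) ⊗_k R → End_R(R ⊗_k g)`, `χ ⊗ r ↦ r • baseChange χ`
    (Φ : R ⊗[k] (lieCentroid k g) →ₗ[k] ((R ⊗[k] g) →ₗ[R] (R ⊗[k] g)))
    (hΦ : ∀ (r : R) (χ : lieCentroid k g),
      Φ (r ⊗ₜ[k] χ) = r • LinearMap.baseChange R (χ : g →ₗ[k] g)) :
    Function.Injective Φ ∧
      ∀ f : (R ⊗[k] g) →ₗ[R] (R ⊗[k] g),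
        (∃ z, Φ z = f) ↔ ∀ x y : R ⊗[k] g, f ⁅x, y⁆ = ⁅f x, y⁆ ∧ f ⁅x, y⁆ = ⁅x, f y⁆ := by
  have hΦ_eq : ⇑Φ = LinearMap.tensorProduct k R g g ∘ₗ (lieCentroid k g).subtype.baseChange R := by
    funext z
    induction z with
    | zero => simp
    | tmul r χ => simp [hΦ, LinearMap.tensorProduct]
    | add x y hx hy => simp_all
  rw [hΦ_eq]
  refine ⟨injective_tensorProduct_comp_baseChange_lieCentroid_subtype R, fun f ↦ ?_⟩
  rw [← LinearMap.mem_range, range_tensorProduct_comp_baseChange_lieCentroid_subtype]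
  rfl
end

section
/- Let k be a field, g a finite-dimensional Lie algebra over k which is perfect (g = [g,g]) and central over k (every k-linear endomorphism χ of g with χ([x,y]) = [χ(x),y] = [x,χ(y)] for all x, y equals multiplication by a unique scalar in k). Let R be a commutative k-algebra, R' a commutative R-algebra that is faithfully flat as an R-module, and L a Lie algebra over R such that there is an isomorphism of Lie algebras over R' between L ⊗_R R' and g ⊗_k R'. Then L is faithful and finitely presented as an R-module. -/
/-!
Both properties descend along the faithfully flat map `R → R'` from the split form `R' ⊗[k] g`.
Since `g ≠ 0` (otherwise the zero endomorphism would be multiplication by both `0` and `1`), the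
free `R'`-module `R' ⊗[k] g` is faithful; an `r` killing `L` kills `R' ⊗[R] L ≃ R' ⊗[k] g`
through its image in `R'`, and `R → R'` is injective. For finite presentation, pick a surjection
`Rⁿ → L`: flatness identifies `R' ⊗[R]` of its kernel with the kernel of the base-changed
surjection onto the finitely presented `R' ⊗[R] L`, and finite generation descends.
-/

open TensorProduct

section Descent

variable {R : Type*} [CommRing R] (R' : Type*) [CommRing R'] [Algebra R R']
  {M : Type*} [AddCommGroup M] [Module R M]

theorem Module.annihilator_le_comap_annihilator_tensorProduct :
    Module.annihilator R M ≤ (Module.annihilator R' (R' ⊗[R] M)).comap (algebraMap R R') := by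
  intro r hr
  rw [Ideal.mem_comap, Module.mem_annihilator]
  intro z
  rw [algebraMap_smul]
  induction z using TensorProduct.induction_on with
  | zero => exact smul_zero r
  | tmul x m => rw [← tmul_smul, Module.mem_annihilator.1 hr m, tmul_zero]
  | add x y hx hy => rw [smul_add, hx, hy, add_zero]

theorem Module.annihilator_eq_bot_of_annihilator_tensorProduct [FaithfulSMul R R']
    (h : Module.annihilator R' (R' ⊗[R] M) = ⊥) : Module.annihilator R M = ⊥ := by
  refine eq_bot_iff.2 ((annihilator_le_comap_annihilator_tensorProduct R').trans ?_)
  rw [h, Ideal.comap_bot_of_injective _ (FaithfulSMul.algebraMap_injective R R')]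

theorem Module.FinitePresentation.of_finitePresentation_tensorProduct_of_faithfullyFlat
    [Module.FaithfullyFlat R R'] [Module.FinitePresentation R' (R' ⊗[R] M)] :
    Module.FinitePresentation R M := by
  have : Module.Finite R M := .of_finite_tensorProduct_of_faithfullyFlat R'
  obtain ⟨n, f, hf⟩ := Module.Finite.exists_fin' R M
  have hfR' : Function.Surjective (AlgebraTensorModule.lTensor R' R' f) :=
    LinearMap.lTensor_surjective R' hf
  have : Module.Finite R' (R' ⊗[R] LinearMap.ker f) :=
    (Module.Finite.equiv_iff (LinearMap.tensorKerEquiv R' R' f)).2 <|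
      Module.Finite.iff_fg.2 (Module.FinitePresentation.fg_ker _ hfR')
  have : Module.Finite R (LinearMap.ker f) := .of_finite_tensorProduct_of_faithfullyFlat R'
  exact Module.finitePresentation_of_free_of_surjective f hf (Module.Finite.iff_fg.1 this)

end Descent

theorem Module.annihilator_tensorProduct_eq_bot_of_free (R A M : Type*) [CommRing R] [CommRing A]
    [Algebra R A] [AddCommGroup M] [Module R M] [Module.Free R M] [Nontrivial M] :
    Module.annihilator A (A ⊗[R] M) = ⊥ := by
  let b := Module.Free.chooseBasis R M
  have := b.index_nonempty
  rw [(Algebra.TensorProduct.basis A b).repr.annihilator_eq, Module.annihilator_eq_bot]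
  infer_instance

theorem nontrivial_of_existsUnique_smul_eq_zero {R M : Type*} [Semiring R] [Nontrivial R]
    [AddCommMonoid M] [Module R M] (h : ∃! c : R, ∀ x : M, c • x = 0) : Nontrivial M := by
  by_contra hM
  rw [not_nontrivial_iff_subsingleton] at hM
  exact zero_ne_one (h.unique (fun _ => Subsingleton.elim _ _) (fun _ => Subsingleton.elim _ _))

theorem twistedForm_faithful_finitePresentation_general
    (k : Type*) [Field k] (g : Type*) [LieRing g] [LieAlgebra k g]
    [FiniteDimensional k g]
    (hgcentral : ∀ χ : g →ₗ[k] g,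
      (∀ x y : g, χ ⁅x, y⁆ = ⁅χ x, y⁆ ∧ χ ⁅x, y⁆ = ⁅x, χ y⁆) →
      ∃! c : k, ∀ x : g, χ x = c • x)
    (R : Type*) [CommRing R]
    (R' : Type*) [CommRing R'] [Algebra R R'] [Module.FaithfullyFlat R R']
    [Algebra k R']
    (L : Type*) [LieRing L] [LieAlgebra R L]
    (e : Nonempty ((R' ⊗[R] L) ≃ₗ⁅R'⁆ (R' ⊗[k] g))) :
    (∀ r : R, (∀ x : L, r • x = 0) → r = 0) ∧ Module.FinitePresentation R L := by
  obtain ⟨e⟩ := e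
  have : Nontrivial g := nontrivial_of_existsUnique_smul_eq_zero <| by
    simpa only [LinearMap.zero_apply, eq_comm (a := (0 : g))] using hgcentral 0 (by simp)
  have hann : Module.annihilator R L = ⊥ := by
    refine Module.annihilator_eq_bot_of_annihilator_tensorProduct R' ?_
    rw [e.toLinearEquiv.annihilator_eq]
    exact Module.annihilator_tensorProduct_eq_bot_of_free k R' g
  have : Module.FinitePresentation R' (R' ⊗[k] g) := Module.finitePresentation_of_projective _ _
  have : Module.FinitePresentation R' (R' ⊗[R] L) := .of_equiv e.toLinearEquiv.symm
  refine ⟨fun r hr => ?_, .of_finitePresentation_tensorProduct_of_faithfullyFlat R'⟩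
  rw [← Submodule.mem_bot R, ← hann]
  exact Module.mem_annihilator.2 hr

/-- Let `k` be a field and `g` a finite-dimensional Lie algebra over
`k` which is perfect and central.  Let `R` be a commutative `k`-algebra, `R'` a
faithfully flat commutative `R`-algebra, and `L` a Lie algebra over `R` whose base
change `R' ⊗[R] L` is isomorphic, as a Lie algebra over `R'`, to `R' ⊗[k] g`.  Then
`L` is faithful and finitely presented as an `R`-module. -/
theorem twistedForm_faithful_finitePresentation
    (k : Type*) [Field k] (g : Type*) [LieRing g] [LieAlgebra k g]
    [FiniteDimensional k g]
    (hgperf : ⁅(⊤ : LieIdeal k g), (⊤ : LieIdeal k g)⁆ = ⊤)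
    (hgcentral : ∀ χ : g →ₗ[k] g,
      (∀ x y : g, χ ⁅x, y⁆ = ⁅χ x, y⁆ ∧ χ ⁅x, y⁆ = ⁅x, χ y⁆) →
      ∃! c : k, ∀ x : g, χ x = c • x)
    (R : Type*) [CommRing R] [Algebra k R]
    (R' : Type*) [CommRing R'] [Algebra R R'] [Module.FaithfullyFlat R R']
    [Algebra k R'] [IsScalarTower k R R']
    (L : Type*) [LieRing L] [LieAlgebra R L]
    (e : Nonempty ((R' ⊗[R] L) ≃ₗ⁅R'⁆ (R' ⊗[k] g))) :
    (∀ r : R, (∀ x : L, r • x = 0) → r = 0) ∧ Module.FinitePresentation R L :=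
  twistedForm_faithful_finitePresentation_general k g hgcentral R R' L e
end

section
/- Let k be a field, g a finite-dimensional Lie algebra over k which is perfect (g = [g,g]) and central over k (every k-linear endomorphism χ of g with χ([x,y]) = [χ(x),y] = [x,χ(y)] for all x, y equals multiplication by a unique scalar in k). Let R be a commutative k-algebra, R' a commutative R-algebra that is faithfully flat as an R-module, and L a Lie algebra over R such that there is an isomorphism of Lie algebras over R' between L ⊗_R R' and g ⊗_k R'. Then the canonical map R → Ctd_k(L) is an isomorphism: every k-linear endomorphism χ of L satisfying χ([x,y]) = [χ(x),y] = [x,χ(y)] for all x, y ∈ L is of the form x ↦ r • x for a unique r ∈ R. -/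
/-!
Perfectness of `g` passes to `R' ⊗[k] g ≅ R' ⊗[R] L` and descends to `L` by faithful
flatness. On a perfect Lie algebra a centroidal map is `R`-linear, because
`χ (r • ⁅x, y⁆) = ⁅r • x, χ y⁆`. Its base change, transported to `R' ⊗[k] g`, is again
centroidal, and centrality of `g` makes it multiplication by some `a ∈ R'`, so that
`a ⊗ₜ x = 1 ⊗ₜ χ x` for all `x`. Since `R' ⊗[R] L` is free of positive rank over `R'`, `L` is
faithfully flat over `R`; tensoring with `L` then kills the class of `a` in `R' ⧸ R`, so `a ∈ R`,
and `L` is a faithful `R`-module, which gives uniqueness.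
-/

open TensorProduct LieAlgebra

namespace Module.FaithfullyFlat

variable {R : Type*} [CommRing R]

theorem of_faithfullyFlat_baseChange (S M : Type*) [CommRing S] [Algebra R S]
    [AddCommGroup M] [Module R M] [FaithfullyFlat R S] [FaithfullyFlat S (S ⊗[R] M)] :
    FaithfullyFlat R M := by
  have : Flat R M := Flat.of_flat_tensorProduct R M S
  rw [iff_flat_and_lTensor_reflects_triviality]
  refine ⟨inferInstance, fun N _ _ _ => ?_⟩
  have : Subsingleton ((S ⊗[R] M) ⊗[S] (S ⊗[R] N)) :=
    (AlgebraTensorModule.distribBaseChange R S M N).symm.toEquiv.subsingleton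
  have : Subsingleton (S ⊗[R] N) := lTensor_reflects_triviality S (S ⊗[R] M) _
  exact lTensor_reflects_triviality R S N

variable {M : Type*} [AddCommGroup M] [Module R M] [FaithfullyFlat R M]

theorem eq_zero_of_forall_tmul_eq_zero {P : Type*} [AddCommGroup P] [Module R P] {p : P}
    (h : ∀ x : M, p ⊗ₜ[R] x = 0) : p = 0 := by
  let f : R →ₗ[R] P := LinearMap.toSpanSingleton R P p
  have hf : f.rTensor M = 0 := TensorProduct.ext' fun r x => by
    simp [f, smul_tmul, h]
  simpa [f] using congr($((zero_iff_rTensor_zero R M f).2 hf) 1)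

instance toFaithfulSMul : FaithfulSMul R M :=
  ⟨fun {r s} h => sub_eq_zero.1 <| eq_zero_of_forall_tmul_eq_zero (R := R) (M := M) fun x => by
    rw [← mul_one (r - s), ← smul_eq_mul, smul_tmul (r - s) (1 : R) x, sub_smul, h, sub_self,
      tmul_zero]⟩

theorem mem_range_algebraMap_of_forall_tmul {A : Type*} [CommRing A] [Algebra R A] {a : A}
    (h : ∀ x : M, ∃ y : M, a ⊗ₜ[R] x = 1 ⊗ₜ y) : a ∈ (algebraMap R A).range := by
  set J : Submodule R A := LinearMap.range (Algebra.linearMap R A)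
  suffices J.mkQ a = 0 by simpa [J, Submodule.Quotient.mk_eq_zero] using this
  refine eq_zero_of_forall_tmul_eq_zero (R := R) (M := M) fun x => ?_
  obtain ⟨y, hy⟩ := h x
  have h1 : J.mkQ 1 = 0 := (Submodule.Quotient.mk_eq_zero J).2 ⟨1, (algebraMap R A).map_one⟩
  simpa [h1] using congr(LinearMap.rTensor M J.mkQ $hy)

theorem exists_smul_eq_of_forall_tmul_eq {A : Type*} [CommRing A] [Algebra R A]
    [FaithfullyFlat R A] {a : A} {f : M → M} (h : ∀ x : M, a ⊗ₜ[R] x = 1 ⊗ₜ f x) :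
    ∃ r : R, ∀ x, f x = r • x := by
  obtain ⟨r, rfl⟩ := mem_range_algebraMap_of_forall_tmul fun x => ⟨f x, h x⟩
  refine ⟨r, fun x => tensorProduct_mk_injective (A := R) (B := A) M ?_⟩
  rw [mk_apply, mk_apply, ← h, Algebra.algebraMap_eq_smul_one, smul_tmul]

end Module.FaithfullyFlat

def IsCentroidal {L : Type*} [Bracket L L] (χ : L → L) : Prop :=
  ∀ x y : L, χ ⁅x, y⁆ = ⁅χ x, y⁆ ∧ χ ⁅x, y⁆ = ⁅x, χ y⁆

namespace IsCentroidal

variable {R L : Type*} [CommRing R] [LieRing L] [LieAlgebra R L]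

theorem conj {L' : Type*} [LieRing L'] [LieAlgebra R L'] {χ : L → L} (hχ : IsCentroidal χ)
    (E : L ≃ₗ⁅R⁆ L') : IsCentroidal (E ∘ χ ∘ E.symm) := fun x y => by
  simp only [Function.comp_apply, E.symm.map_lie]
  exact ⟨by rw [(hχ _ _).1, E.map_lie, E.apply_symm_apply],
    by rw [(hχ _ _).2, E.map_lie, E.apply_symm_apply]⟩

theorem map_smul_of_perfect (hL : derivedSeries R L 1 = ⊤) {χ : L →+ L} (hχ : IsCentroidal χ)
    (r : R) (x : L) : χ (r • x) = r • χ x := by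
  have hx : x ∈ Submodule.span R {⁅x, y⁆ | (x : L) (y : L)} := by
    rw [← coe_derivedSeries_one_eq, hL]; trivial
  induction hx using Submodule.span_induction generalizing r with
  | mem _ h =>
    obtain ⟨x, y, rfl⟩ := h
    rw [← smul_lie, (hχ _ _).2, (hχ _ _).2, smul_lie]
  | zero => simp
  | add x y _ _ hx hy => rw [smul_add, map_add, map_add, smul_add, hx, hy]
  | smul s x _ hx => rw [smul_smul, hx, hx, smul_smul, mul_comm]

theorem baseChange (A : Type*) [CommRing A] [Algebra R A] {χ : L →ₗ[R] L}
    (hχ : IsCentroidal χ) : IsCentroidal (χ.baseChange A) := by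
  intro u v
  induction u using TensorProduct.induction_on with
  | zero => simp
  | add u₁ u₂ h₁ h₂ =>
    exact ⟨by rw [add_lie, map_add, map_add, add_lie, h₁.1, h₂.1],
      by rw [add_lie, map_add, add_lie, h₁.2, h₂.2]⟩
  | tmul a x =>
    induction v using TensorProduct.induction_on with
    | zero => simp
    | add v₁ v₂ h₁ h₂ =>
      exact ⟨by rw [lie_add, map_add, lie_add, h₁.1, h₂.1],
        by rw [lie_add, map_add, map_add, lie_add, h₁.2, h₂.2]⟩
    | tmul b y =>
      simp only [ExtendScalars.bracket_tmul, LinearMap.baseChange_tmul]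
      exact ⟨congrArg _ (hχ x y).1, congrArg _ (hχ x y).2⟩

end IsCentroidal

theorem LieAlgebra.derivedSeries_one_eq_top_of_baseChange {R L : Type*} [CommRing R] [LieRing L]
    [LieAlgebra R L] (A : Type*) [CommRing A] [Algebra R A] [Module.FaithfullyFlat R A]
    (h : derivedSeries A (A ⊗[R] L) 1 = ⊤) : derivedSeries R L 1 = ⊤ := by
  rw [derivedSeries_baseChange, ← LieSubmodule.baseChange_top, ← LieSubmodule.toSubmodule_inj,
    LieSubmodule.coe_baseChange, LieSubmodule.coe_baseChange, Submodule.baseChange_inj] at h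
  exact (LieSubmodule.toSubmodule_inj _ _).1 h

namespace Module.Dual

section

variable {k A V : Type*} [CommRing k] [AddCommGroup A] [Module k A] [AddCommGroup V] [Module k V]

def applyLeft (f : Module.Dual k A) : A ⊗[k] V →ₗ[k] V :=
  TensorProduct.lid k V ∘ₗ f.rTensor V

@[simp]
theorem applyLeft_tmul (f : Module.Dual k A) (a : A) (v : V) :
    f.applyLeft (a ⊗ₜ v) = f a • v := rfl

theorem apply_rid_lTensor (f : Module.Dual k A) (g : Module.Dual k V) (w : A ⊗[k] V) :
    f (TensorProduct.rid k A (g.lTensor A w)) = g (f.applyLeft w) := by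
  induction w using TensorProduct.induction_on with
  | zero => simp
  | tmul a v => simp [mul_comm]
  | add w₁ w₂ h₁ h₂ => simp [h₁, h₂]

theorem eq_zero_of_forall_applyLeft_eq_zero [Module.Free k A] {w : A ⊗[k] V}
    (h : ∀ f : Module.Dual k A, f.applyLeft w = 0) : w = 0 := by
  let b := Module.Free.chooseBasis k A
  have hcoord (w : A ⊗[k] V) (i) : equivFinsuppOfBasisLeft b w i = applyLeft (b.coord i) w := by
    induction w using TensorProduct.induction_on with
    | zero => simp
    | tmul a v => simp
    | add w₁ w₂ h₁ h₂ => simp [h₁, h₂]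
  apply (equivFinsuppOfBasisLeft b).injective
  ext i
  simp [hcoord, h]

end

section

variable {k A g : Type*} [CommRing k] [CommRing A] [Algebra k A] [LieRing g] [LieAlgebra k g]

theorem applyLeft_lie_one_tmul (f : Module.Dual k A) (w : A ⊗[k] g) (y : g) :
    f.applyLeft ⁅w, (1 : A) ⊗ₜ[k] y⁆ = ⁅f.applyLeft w, y⁆ := by
  induction w using TensorProduct.induction_on with
  | zero => simp
  | tmul a x => simp [ExtendScalars.bracket_tmul]
  | add w₁ w₂ h₁ h₂ => simp [add_lie, h₁, h₂]

theorem applyLeft_one_tmul_lie (f : Module.Dual k A) (w : A ⊗[k] g) (y : g) :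
    f.applyLeft ⁅(1 : A) ⊗ₜ[k] y, w⁆ = ⁅y, f.applyLeft w⁆ := by
  induction w using TensorProduct.induction_on with
  | zero => simp
  | tmul a x => simp [ExtendScalars.bracket_tmul]
  | add w₁ w₂ h₁ h₂ => simp [lie_add, h₁, h₂]

end

end Module.Dual

theorem IsCentroidal.exists_eq_smul_of_baseChange {k A g : Type*} [Field k] [CommRing A]
    [Algebra k A] [LieRing g] [LieAlgebra k g]
    (hg : ∀ ψ : g →ₗ[k] g, IsCentroidal ψ → ∃ c : k, ∀ x, ψ x = c • x)
    {χ : A ⊗[k] g →ₗ[A] A ⊗[k] g} (hχ : IsCentroidal χ) : ∃ a : A, ∀ u, χ u = a • u := by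
  rcases subsingleton_or_nontrivial g with _ | _
  · exact ⟨0, fun u => Subsingleton.elim _ _⟩
  -- Contracting the left factor against `f` turns `χ` into a centroidal endomorphism of `g`,
  -- i.e. a scalar `c f`; a functional `μ` with `μ x₀ = 1` yields `a` with `f a = c f`.
  let ψ (f : Module.Dual k A) : g →ₗ[k] g :=
    f.applyLeft ∘ₗ χ.restrictScalars k ∘ₗ TensorProduct.mk k A g 1
  have hψ (f : Module.Dual k A) : IsCentroidal (ψ f) := fun x y => by
    have h1 : (1 : A) ⊗ₜ[k] ⁅x, y⁆ = ⁅(1 : A) ⊗ₜ[k] x, (1 : A) ⊗ₜ[k] y⁆ := by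
      rw [ExtendScalars.bracket_tmul, one_mul]
    simp only [ψ, LinearMap.comp_apply, mk_apply, LinearMap.restrictScalars_apply, h1]
    exact ⟨by rw [(hχ _ _).1, f.applyLeft_lie_one_tmul],
      by rw [(hχ _ _).2, f.applyLeft_one_tmul_lie]⟩
  choose c hc using fun f => hg (ψ f) (hψ f)
  obtain ⟨x₀, hx₀⟩ := exists_ne (0 : g)
  obtain ⟨μ, hμ⟩ := Module.Projective.exists_dual_eq_one k hx₀
  set a := TensorProduct.rid k A (μ.lTensor A (χ (1 ⊗ₜ x₀)))
  have hca (f : Module.Dual k A) : f a = c f := by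
    rw [Module.Dual.apply_rid_lTensor]
    simpa [hμ, ψ] using congrArg μ (hc f x₀)
  have hone (x : g) : χ (1 ⊗ₜ x) = a ⊗ₜ x := by
    rw [← sub_eq_zero]
    refine Module.Dual.eq_zero_of_forall_applyLeft_eq_zero fun f => ?_
    simpa [hca, ψ] using sub_eq_zero.2 (hc f x)
  refine ⟨a, fun u => ?_⟩
  induction u using TensorProduct.induction_on with
  | zero => simp
  | tmul b x =>
    rw [show b ⊗ₜ[k] x = b • (1 : A) ⊗ₜ[k] x by simp [smul_tmul'], map_smul, hone]
    simp [smul_tmul', mul_comm]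
  | add u₁ u₂ h₁ h₂ => rw [map_add, h₁, h₂, smul_add]

theorem twistedForm_centroid_eq_base_general
    (k : Type*) [Field k] (g : Type*) [LieRing g] [LieAlgebra k g]
    (hgperf : ⁅(⊤ : LieIdeal k g), (⊤ : LieIdeal k g)⁆ = ⊤)
    (hgcentral : ∀ χ : g →ₗ[k] g,
      (∀ x y : g, χ ⁅x, y⁆ = ⁅χ x, y⁆ ∧ χ ⁅x, y⁆ = ⁅x, χ y⁆) →
      ∃! c : k, ∀ x : g, χ x = c • x)
    (R : Type*) [CommRing R]
    (R' : Type*) [CommRing R'] [Algebra R R'] [Module.FaithfullyFlat R R']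
    [Algebra k R']
    (L : Type*) [LieRing L] [LieAlgebra R L] [LieAlgebra k L]
    (e : Nonempty ((R' ⊗[R] L) ≃ₗ⁅R'⁆ (R' ⊗[k] g))) :
    ∀ χ : L →ₗ[k] L,
      (∀ x y : L, χ ⁅x, y⁆ = ⁅χ x, y⁆ ∧ χ ⁅x, y⁆ = ⁅x, χ y⁆) →
      ∃! r : R, ∀ x : L, χ x = r • x := by
  obtain ⟨E⟩ := e
  intro χ hχ
  have : Nontrivial g := by
    by_contra! h
    obtain ⟨c, -, hc⟩ := hgcentral 0 fun x y => by simp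
    exact zero_ne_one <| (hc 0 fun _ => Subsingleton.elim _ _).trans
      (hc 1 fun _ => Subsingleton.elim _ _).symm
  have : Module.FaithfullyFlat R' (R' ⊗[R] L) := .of_linearEquiv R' _ E.toLinearEquiv
  have : Module.FaithfullyFlat R L := .of_faithfullyFlat_baseChange R' L
  have hL : derivedSeries R L 1 = ⊤ := by
    refine derivedSeries_one_eq_top_of_baseChange R' ?_
    rw [← LieIdeal.derivedSeries_map_eq 1 E.symm.surjective, derivedSeries_baseChange,
      show derivedSeries k g 1 = ⊤ from hgperf, LieSubmodule.baseChange_top]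
    exact LieIdeal.derivedSeries_map_eq 0 E.symm.surjective
  let χR : L →ₗ[R] L :=
    { χ with map_smul' := IsCentroidal.map_smul_of_perfect hL (χ := χ.toAddMonoidHom) hχ }
  obtain ⟨a, ha⟩ := IsCentroidal.exists_eq_smul_of_baseChange
    (fun ψ hψ => (hgcentral ψ hψ).exists) (χ := E.toLinearEquiv.conj (χR.baseChange R'))
    ((IsCentroidal.baseChange R' (χ := χR) hχ).conj E)
  have hax (x : L) : a ⊗ₜ[R] x = 1 ⊗ₜ χ x := by
    have h := ha (E.toLinearEquiv (1 ⊗ₜ x))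
    rw [LinearEquiv.conj_apply_apply, LinearEquiv.symm_apply_apply, ← map_smul] at h
    have h' := E.toLinearEquiv.injective h
    rw [LinearMap.baseChange_tmul, smul_tmul', smul_eq_mul, mul_one] at h'
    exact h'.symm
  obtain ⟨r, hr⟩ := Module.FaithfullyFlat.exists_smul_eq_of_forall_tmul_eq hax
  exact ⟨r, hr, fun s hs => eq_of_smul_eq_smul (α := L) fun x => by rw [← hs, hr]⟩

/-- Let `k` be a field and `g` a finite-dimensional Lie algebra over
`k` which is perfect and central.  Let `R` be a commutative `k`-algebra, `R'` a
faithfully flat commutative `R`-algebra, and `L` a Lie algebra over `R` whose base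
change `R' ⊗[R] L` is isomorphic, as a Lie algebra over `R'`, to `R' ⊗[k] g`.  Then
the canonical map `R → Ctd_k(L)` is an isomorphism: every `k`-linear endomorphism of
`L` lying in the centroid is the homothety by a unique `r ∈ R`. -/
theorem twistedForm_centroid_eq_base
    (k : Type*) [Field k] (g : Type*) [LieRing g] [LieAlgebra k g]
    [FiniteDimensional k g]
    (hgperf : ⁅(⊤ : LieIdeal k g), (⊤ : LieIdeal k g)⁆ = ⊤)
    (hgcentral : ∀ χ : g →ₗ[k] g,
      (∀ x y : g, χ ⁅x, y⁆ = ⁅χ x, y⁆ ∧ χ ⁅x, y⁆ = ⁅x, χ y⁆) →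
      ∃! c : k, ∀ x : g, χ x = c • x)
    (R : Type*) [CommRing R] [Algebra k R]
    (R' : Type*) [CommRing R'] [Algebra R R'] [Module.FaithfullyFlat R R']
    [Algebra k R'] [IsScalarTower k R R']
    (L : Type*) [LieRing L] [LieAlgebra R L] [LieAlgebra k L] [IsScalarTower k R L]
    (e : Nonempty ((R' ⊗[R] L) ≃ₗ⁅R'⁆ (R' ⊗[k] g))) :
    ∀ χ : L →ₗ[k] L,
      (∀ x y : L, χ ⁅x, y⁆ = ⁅χ x, y⁆ ∧ χ ⁅x, y⁆ = ⁅x, χ y⁆) →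
      ∃! r : R, ∀ x : L, χ x = r • x :=
  twistedForm_centroid_eq_base_general k g hgperf hgcentral R R' L e
end

section
/- Let k be a commutative ring, A a k-module, S a commutative k-algebra, and D : S → S a k-derivation. Let S₀ = {s ∈ S : D(s) = 0}, a k-subalgebra of S. Let u be an S-linear automorphism of the S-module A ⊗_k S such that for every a ∈ A, the element u⁻¹(a ⊗ 1) lies in the image of A ⊗_k S₀ in A ⊗_k S (i.e. u⁻¹(a ⊗ 1) is a sum of elements a_i ⊗ s_i with D(s_i) = 0). Then u commutes with id_A ⊗ D: u ∘ (id_A ⊗ D) = (id_A ⊗ D) ∘ u as k-linear endomorphisms of A ⊗_k S. -/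
open TensorProduct

/-!
`D ⊗ id` satisfies the Leibniz rule for the `S`-module structure of `S ⊗[k] A`. Hence for an
`S`-linear `v`, on `s ⊗ a = s • (1 ⊗ a)` the maps `(D ⊗ id) ∘ v` and `v ∘ (D ⊗ id)` differ by
`s • (D ⊗ id) (v (1 ⊗ a))`. For `v = u⁻¹` this vanishes, because `u⁻¹ (1 ⊗ a)` has constant
coefficients; so `u⁻¹`, and therefore `u`, commutes with `D ⊗ id`.
-/

namespace Derivation

variable {k S : Type*} [CommRing k] [CommRing S] [Algebra k S] (D : Derivation k S S)
  {A B : Type*} [AddCommGroup A] [Module k A] [AddCommGroup B] [Module k B]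

theorem rTensor_tmul_eq_smul_one_tmul (s : S) (a : A) :
    LinearMap.rTensor A D.toLinearMap (s ⊗ₜ[k] a) = D s • ((1 : S) ⊗ₜ[k] a) := by
  simp [smul_tmul']

theorem rTensor_smul (s : S) (x : S ⊗[k] A) :
    LinearMap.rTensor A D.toLinearMap (s • x) =
      D s • x + s • LinearMap.rTensor A D.toLinearMap x := by
  induction x using TensorProduct.induction_on with
  | zero => simp
  | tmul t a =>
    simp only [smul_tmul', smul_eq_mul, LinearMap.rTensor_tmul, coeFn_coe, leibniz, add_tmul,
      mul_comm (D s) t]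
    abel
  | add x y hx hy =>
    simp only [smul_add, map_add, hx, hy]
    abel

theorem span_constants_tmul_le_ker_rTensor :
    Submodule.span k {x : S ⊗[k] A | ∃ (s : S) (a : A), D s = 0 ∧ x = s ⊗ₜ[k] a} ≤
      LinearMap.ker (LinearMap.rTensor A D.toLinearMap) := by
  rw [Submodule.span_le]
  rintro _ ⟨s, a, hs, rfl⟩
  simp [hs]

theorem map_rTensor_eq_rTensor_map_of_forall_one_tmul (v : S ⊗[k] A →ₗ[S] S ⊗[k] B)
    (hv : ∀ a : A, LinearMap.rTensor B D.toLinearMap (v ((1 : S) ⊗ₜ[k] a)) = 0)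
    (x : S ⊗[k] A) :
    v (LinearMap.rTensor A D.toLinearMap x) = LinearMap.rTensor B D.toLinearMap (v x) := by
  induction x using TensorProduct.induction_on with
  | zero => simp
  | tmul s a =>
    have hsa : s ⊗ₜ[k] a = s • ((1 : S) ⊗ₜ[k] a) := by simp [smul_tmul']
    rw [rTensor_tmul_eq_smul_one_tmul, hsa, v.map_smul, v.map_smul, rTensor_smul, hv, smul_zero,
      add_zero]
  | add x y hx hy => simp only [map_add, hx, hy]

end Derivation

/-- Let `k` be a commutative ring, `A` a `k`-module, `S` a commutative
`k`-algebra and `D` a `k`-derivation of `S`; let `S₀ = ker D` be the constants.  If `u`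
is an `S`-linear automorphism of the `S`-module `S ⊗[k] A` (the base change of `A`,
written with the ring factor on the left) such that `u⁻¹(1 ⊗ a)` lies in the image of
`S₀ ⊗[k] A` for every `a ∈ A`, then `u` commutes with `D ⊗ id_A`. -/
theorem automorphism_commutes_with_derivation
    (k : Type*) [CommRing k] (A : Type*) [AddCommGroup A] [Module k A]
    (S : Type*) [CommRing S] [Algebra k S]
    (D : Derivation k S S)
    (u : (S ⊗[k] A) ≃ₗ[S] (S ⊗[k] A))
    (hu : ∀ a : A, u.symm ((1 : S) ⊗ₜ[k] a) ∈
      Submodule.span k {x : S ⊗[k] A | ∃ (s : S) (a' : A), D s = 0 ∧ x = s ⊗ₜ[k] a'}) :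
    ∀ x : S ⊗[k] A,
      u (LinearMap.rTensor A D.toLinearMap x) = LinearMap.rTensor A D.toLinearMap (u x) := by
  intro x
  have hsymm := D.map_rTensor_eq_rTensor_map_of_forall_one_tmul u.symm.toLinearMap
    (fun a => D.span_constants_tmul_le_ker_rTensor (hu a)) (u x)
  rw [LinearEquiv.coe_coe, u.symm_apply_apply] at hsymm
  rw [← hsymm, u.apply_symm_apply]
end

section
/- Let k be a commutative ring, n ≥ 1, and m₁, …, mₙ positive integers each invertible in k. Let S = k[u₁^{±1}, …, uₙ^{±1}] be the Laurent polynomial ring in n variables over k (the group algebra of ℤⁿ over k), and let φ : S → S be the k-algebra homomorphism determined by φ(uᵢ) = uᵢ^{mᵢ} for each i (induced by the group homomorphism ℤⁿ → ℤⁿ multiplying the i-th coordinate by mᵢ). Then S, regarded as an algebra over itself via φ, is faithfully flat and formally étale: S is a faithfully flat module over its subring φ(S), and the ring extension φ : S → S is formally étale. -/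
/-!
The remainders `0 ≤ tᵢ < mᵢ` form a transversal of the image of `φ` on exponents, so the monomials
`u^t` are a finite basis of `S` over `φ(S)`: `S` is finite free, hence faithfully flat and finitely
presented. Every monomial `u` has `u^N ∈ φ(S)` for `N = ∏ mᵢ`, and `N u^(N-1)` is a unit, so
`du = 0` in `Ω[S⁄φ(S)]`. Thus `S` is flat, unramified and finitely presented over `φ(S)`,
hence étale.
-/

open AddMonoidAlgebra Function

theorem Derivation.map_eq_zero_of_map_pow_eq_zero {R A M : Type*} [CommSemiring R]
    [CommSemiring A] [Algebra R A] [AddCommMonoid M] [Module A M] [Module R M]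
    [IsScalarTower R A M] (D : Derivation R A M) {a : A} {N : ℕ}
    (ha : IsUnit ((N : A) * a ^ (N - 1))) (h : D (a ^ N) = 0) : D a = 0 := by
  rwa [D.leibniz_pow, ← Nat.cast_smul_eq_nsmul A, smul_smul, ha.smul_eq_zero] at h

theorem Module.FaithfullyFlat.of_basis {R M ι : Type*} [CommRing R] [AddCommGroup M]
    [Module R M] [Nonempty ι] (b : Basis ι R M) : Module.FaithfullyFlat R M :=
  .of_linearEquiv _ _ b.repr

theorem bijective_mul_add_of_pos {ι : Type*} (m : ι → ℕ) (hm : ∀ i, 0 < m i) :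
    Bijective fun p : (Π i, Fin (m i)) × (ι → ℤ) => fun i => (m i : ℤ) * p.2 i + p.1 i := by
  have (i : ι) : NeZero (m i) := ⟨(hm i).ne'⟩
  let e : (Π i, Fin (m i)) × (ι → ℤ) ≃ (ι → ℤ) :=
    ((Equiv.prodComm _ _).trans (Equiv.arrowProdEquivProdArrow ι _ _).symm).trans
      (Equiv.piCongrRight fun i => (Int.divModEquiv (m i)).symm)
  convert e.bijective using 1
  funext p i
  simp [e, mul_comm]

namespace AddMonoidAlgebra

section Basis

variable {k G G' T : Type*} [CommSemiring k] [AddCommMonoid G] [AddCommMonoid G']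
  {f : G →+ G'} [Algebra k[G] k[G']]
  (hφ : ∀ g c, algebraMap k[G] k[G'] (single g c) = single (f g) c)
  (r : T → G') (hr : Bijective fun p : T × G => f p.2 + r p.1)

include hφ hr in
theorem linearCombination_single_bijective :
    Bijective (Finsupp.linearCombination k[G] fun t => single (r t) (1 : k)) := by
  let σ : T × G ≃ G' := Equiv.ofBijective _ hr
  let E : (T →₀ k[G]) ≃+ k[G'] :=
    ((Finsupp.mapRange.addEquiv (coeffLinearEquiv k).toAddEquiv).trans
      (Finsupp.curryAddEquiv.symm.trans (Finsupp.domCongr σ))).trans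
      (coeffLinearEquiv k).toAddEquiv.symm
  suffices h : ⇑(Finsupp.linearCombination k[G] fun t => single (r t) (1 : k)) = E from
    h ▸ E.bijective
  funext x
  induction x using Finsupp.induction_linear with
  | zero => simp
  | add x y hx hy => rw [map_add, map_add, hx, hy]
  | single t y =>
    induction y using AddMonoidAlgebra.induction_linear with
    | zero => simp
    | add y z hy hz => rw [Finsupp.single_add, map_add, map_add, hy, hz]
    | single g c =>
      rw [Finsupp.linearCombination_single, Algebra.smul_def, hφ, single_mul_single, mul_one]
      simp [E, σ]

noncomputable def basisOfTransversal : Module.Basis T k[G] k[G'] :=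
  .ofRepr (LinearEquiv.ofBijective _ (linearCombination_single_bijective hφ r hr)).symm

end Basis

theorem faithfullyFlat_of_transversal {k G G' T : Type*} [CommRing k] [AddCommMonoid G]
    [AddCommMonoid G'] {f : G →+ G'} [Algebra k[G] k[G']]
    (hφ : ∀ g c, algebraMap k[G] k[G'] (single g c) = single (f g) c) [Nonempty T]
    (r : T → G') (hr : Bijective fun p : T × G => f p.2 + r p.1) :
    Module.FaithfullyFlat k[G] k[G'] :=
  .of_basis (basisOfTransversal hφ r hr)

variable {k G G' T : Type*} [CommRing k] [AddCommMonoid G] [AddCommGroup G']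
  {f : G →+ G'} [Algebra k[G] k[G']]
  (hφ : ∀ g c, algebraMap k[G] k[G'] (single g c) = single (f g) c)

include hφ in
theorem formallyUnramified_of_nsmul_mem_range {N : ℕ} (hN : IsUnit (N : k))
    (hfN : ∀ g', ∃ g, f g = N • g') :
    Algebra.FormallyUnramified k[G] k[G'] := by
  have hD_single_one (g' : G') : KaehlerDifferential.D k[G] k[G'] (single g' 1) = 0 := by
    obtain ⟨g, hg⟩ := hfN g'
    have hunit : IsUnit (single g' (1 : k)) :=
      isUnit_iff_exists_inv.mpr
        ⟨single (-g') 1, by rw [single_mul_single, add_neg_cancel, mul_one, ← one_def]⟩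
    refine Derivation.map_eq_zero_of_map_pow_eq_zero _ (N := N) ?_ ?_
    · have hN' := hN.map (algebraMap k k[G'])
      rw [map_natCast] at hN'
      exact hN'.mul (hunit.pow _)
    · rw [single_pow, one_pow, ← hg, ← hφ, Derivation.map_algebraMap]
  have hD (x : k[G']) : KaehlerDifferential.D k[G] k[G'] x = 0 := by
    induction x using AddMonoidAlgebra.induction_linear with
    | zero => exact map_zero _
    | add x y hx hy => rw [map_add, hx, hy, add_zero]
    | single g' c =>
      have : single g' c = algebraMap k[G] k[G'] (single 0 c) * single g' 1 := by
        rw [hφ, map_zero, single_mul_single, zero_add, mul_one]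
      rw [this, ← Algebra.smul_def, Derivation.map_smul, hD_single_one, smul_zero]
  constructor
  rw [← Submodule.subsingleton_iff k[G'], ← subsingleton_iff_bot_eq_top,
    ← KaehlerDifferential.span_range_derivation, eq_comm, Submodule.span_eq_bot]
  rintro _ ⟨x, rfl⟩
  exact hD x

include hφ in
theorem etale_of_transversal [Finite T] (r : T → G') (hr : Bijective fun p : T × G => f p.2 + r p.1)
    {N : ℕ} (hN : IsUnit (N : k)) (hfN : ∀ g', ∃ g, f g = N • g') : Algebra.Etale k[G] k[G'] :=
  have := Module.Free.of_basis (basisOfTransversal hφ r hr)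
  have := Module.Finite.of_basis (basisOfTransversal hφ r hr)
  have := Module.finitePresentation_of_projective k[G] k[G']
  have := formallyUnramified_of_nsmul_mem_range hφ hN hfN
  .of_formallyUnramified_of_flat

end AddMonoidAlgebra

theorem laurent_root_extension_faithfullyFlat_formallyEtale_general
    (k : Type*) [CommRing k] (n : ℕ)
    (m : Fin n → ℕ) (hm : ∀ i, 0 < m i) (hmk : ∀ i, IsUnit ((m i : k)))
    (f : (Fin n → ℤ) →+ (Fin n → ℤ))
    (hf : ∀ (e : Fin n → ℤ) (i : Fin n), f e i = (m i : ℤ) * e i) :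
    (@Module.FaithfullyFlat (AddMonoidAlgebra k (Fin n → ℤ)) (AddMonoidAlgebra k (Fin n → ℤ))
      _ _ (@Algebra.toModule _ _ _ _
        ((AddMonoidAlgebra.mapDomainAlgHom k k f).toRingHom.toAlgebra))) ∧
    (@Algebra.FormallyEtale (AddMonoidAlgebra k (Fin n → ℤ))
      (AddMonoidAlgebra k (Fin n → ℤ)) _ _
      ((AddMonoidAlgebra.mapDomainAlgHom k k f).toRingHom.toAlgebra)) := by
  let _ := (mapDomainAlgHom k k f).toRingHom.toAlgebra
  have hφ (e : Fin n → ℤ) (c : k) :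
      algebraMap k[Fin n → ℤ] k[Fin n → ℤ] (single e c) = single (f e) c :=
    mapDomain_single
  let r : (Π i, Fin (m i)) → Fin n → ℤ := fun t i => t i
  have hr : Bijective fun p : (Π i, Fin (m i)) × (Fin n → ℤ) => f p.2 + r p.1 := by
    convert bijective_mul_add_of_pos m hm using 2 with p
    funext i
    simp [r, hf]
  have : Nonempty (Π i, Fin (m i)) := ⟨fun i => ⟨0, hm i⟩⟩
  have hN : IsUnit ((∏ i, m i : ℕ) : k) := by
    rw [Nat.cast_prod]
    exact IsUnit.prod_univ_iff.mpr hmk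
  have hfN (e : Fin n → ℤ) : ∃ e', f e' = (∏ i, m i) • e := by
    refine ⟨fun i => ((∏ j, m j) / m i : ℕ) * e i, funext fun i => ?_⟩
    rw [hf, Pi.smul_apply, nsmul_eq_mul, ← mul_assoc, ← Nat.cast_mul,
      Nat.mul_div_cancel' (Finset.dvd_prod_of_mem m (Finset.mem_univ i))]
  exact ⟨faithfullyFlat_of_transversal hφ r hr,
    (etale_of_transversal hφ r hr hN hfN).formallyEtale⟩

/-- Let `k` be a commutative ring and `m₁, …, mₙ` positive integers
invertible in `k`.  Let `S = k[u₁^{±1}, …, uₙ^{±1}]` be the Laurent polynomial ring in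
`n` variables over `k`, i.e. the group algebra of `ℤⁿ` over `k`, and let `φ : S → S` be
the `k`-algebra endomorphism induced by the group endomorphism of `ℤⁿ` multiplying the
`i`-th coordinate by `mᵢ` (so `φ(uᵢ) = uᵢ^{mᵢ}`).  Then `S`, regarded as an algebra
over itself via `φ`, is faithfully flat and formally étale. -/
theorem laurent_root_extension_faithfullyFlat_formallyEtale
    (k : Type*) [CommRing k] (n : ℕ) (hn : 1 ≤ n)
    (m : Fin n → ℕ) (hm : ∀ i, 0 < m i) (hmk : ∀ i, IsUnit ((m i : k)))
    (f : (Fin n → ℤ) →+ (Fin n → ℤ))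
    (hf : ∀ (e : Fin n → ℤ) (i : Fin n), f e i = (m i : ℤ) * e i) :
    (@Module.FaithfullyFlat (AddMonoidAlgebra k (Fin n → ℤ)) (AddMonoidAlgebra k (Fin n → ℤ))
      _ _ (@Algebra.toModule _ _ _ _
        ((AddMonoidAlgebra.mapDomainAlgHom k k f).toRingHom.toAlgebra))) ∧
    (@Algebra.FormallyEtale (AddMonoidAlgebra k (Fin n → ℤ))
      (AddMonoidAlgebra k (Fin n → ℤ)) _ _
      ((AddMonoidAlgebra.mapDomainAlgHom k k f).toRingHom.toAlgebra)) :=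
  laurent_root_extension_faithfullyFlat_formallyEtale_general k n m hm hmk f hf
end

section
/- Let k be a field, n ≥ 1, and m₁, …, mₙ positive integers invertible in k such that k contains a primitive mᵢ-th root of unity ζᵢ for each i. Let g be a Lie algebra over k with pairwise commuting k-Lie algebra automorphisms σ₁, …, σₙ satisfying σᵢ^{mᵢ} = id. Let S = k[u₁^{±1}, …, uₙ^{±1}], let R ⊆ S be the k-subalgebra k[u₁^{±m₁}, …, uₙ^{±mₙ}], and for each i let γᵢ be the k-algebra automorphism of S with γᵢ(uᵢ) = ζᵢ^{-1} uᵢ and γᵢ(u_j) = u_j for j ≠ i. Define the multiloop algebra L(g, σ) = {x ∈ g ⊗_k S : (σᵢ ⊗ γᵢ)(x) = x for all i}, a Lie algebra over R. Then the S-linear map L(g, σ) ⊗_R S → g ⊗_k S induced by (x, s) ↦ s • x is an isomorphism of Lie algebras over S. -/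
/-!
The monomials `u^f` with `0 ≤ fᵢ < mᵢ` span `S` over `R`, and `u^f • L(g, σ)` lies in the
simultaneous eigenspace of the `γᵢ ⊗ σᵢ` for the character `(ζᵢ^{-fᵢ})ᵢ`. These characters are
distinct, so independence of simultaneous eigenspaces gives injectivity. For surjectivity, the
commuting `σᵢ` of finite order are simultaneously diagonalisable (through the averaging projectors
`m⁻¹ ∑_{j<m} (μ⁻¹ σ)^j`, which need `m` invertible in `k`); if `σᵢ y = ζᵢ^{cᵢ} y` for all `i`, then
`u^c ⊗ y` is fixed, hence lies in `L(g, σ)`, and `1 ⊗ y = u^{-c} • (u^c ⊗ y)` is in the image.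
-/

open TensorProduct

set_option maxSynthPendingDepth 3
set_option synthInstance.maxHeartbeats 1000000

/-- The endomorphism of `ℤⁿ` multiplying the `i`-th coordinate by `mᵢ`
(inducing `uᵢ ↦ uᵢ^{mᵢ}` on the Laurent polynomial ring). -/
def expMulHom {n : ℕ} (m : Fin n → ℕ) : (Fin n → ℤ) →+ (Fin n → ℤ) where
  toFun e := fun i => (m i : ℤ) * e i
  map_zero' := by ext i; simp
  map_add' a b := by ext i; simp [mul_add]

/-- The subring `R = k[u₁^{±m₁}, …, uₙ^{±mₙ}]` of the Laurent polynomial ring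
`S = k[u₁^{±1}, …, uₙ^{±1}]` (realised as the group algebra of `ℤⁿ`), namely the image
of `S` under the `k`-algebra map `uᵢ ↦ uᵢ^{mᵢ}`. -/
noncomputable def multiloopBase (k : Type*) [CommRing k] (n : ℕ) (m : Fin n → ℕ) :
    Subalgebra k (AddMonoidAlgebra k (Fin n → ℤ)) :=
  (AddMonoidAlgebra.mapDomainAlgHom k k (expMulHom m)).range

theorem IsPrimitiveRoot.geom_sum_pow_eq_zero {k : Type*} [Field k] {ζ : k} {m j : ℕ}
    (hζ : IsPrimitiveRoot ζ m) (hj₀ : j ≠ 0) (hjm : j < m) :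
    ∑ c ∈ Finset.range m, (ζ ^ j) ^ c = 0 := by
  rw [geom_sum_eq (hζ.pow_ne_one_of_pos_of_lt hj₀ hjm), pow_right_comm, hζ.pow_eq_one,
    one_pow, sub_self, zero_div]

namespace Module.End

variable {k V : Type*} [Field k] [AddCommGroup V] [Module k V]

noncomputable def eigenProj (σ : End k V) (m : ℕ) (μ : k) : End k V :=
  (m : k)⁻¹ • ∑ j ∈ Finset.range m, (μ⁻¹ • σ) ^ j

theorem eigenProj_apply_mem_eigenspace {σ : End k V} {m : ℕ} {μ : k} (hσ : σ ^ m = 1)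
    (hμ : μ ^ m = 1) (x : V) : eigenProj σ m μ x ∈ σ.eigenspace μ := by
  obtain rfl | hm := eq_or_ne m 0
  · simp [eigenProj]
  have hμ₀ : μ ≠ 0 := by rintro rfl; simp [zero_pow hm] at hμ
  have hτ : (μ⁻¹ • σ) * ∑ j ∈ Finset.range m, (μ⁻¹ • σ) ^ j =
      ∑ j ∈ Finset.range m, (μ⁻¹ • σ) ^ j := by
    rw [← sub_eq_zero, ← sub_one_mul, mul_geom_sum, smul_pow, hσ, inv_pow, hμ, inv_one,
      one_smul, sub_self]
  have hσ_sum : σ * ∑ j ∈ Finset.range m, (μ⁻¹ • σ) ^ j =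
      μ • ∑ j ∈ Finset.range m, (μ⁻¹ • σ) ^ j := by
    conv_rhs => rw [← hτ]
    rw [smul_mul_assoc, smul_smul, mul_inv_cancel₀ hμ₀, one_smul]
  rw [mem_eigenspace_iff, ← mul_apply, eigenProj, mul_smul_comm, hσ_sum, smul_comm]
  rfl

theorem sum_eigenProj_pow_eq_one {σ : End k V} {m : ℕ} {ζ : k} (hζ : IsPrimitiveRoot ζ m)
    (hm : (m : k) ≠ 0) : ∑ c ∈ Finset.range m, eigenProj σ m (ζ ^ c) = 1 := by
  have hm₀ : 0 < m := Nat.pos_of_ne_zero (by rintro rfl; simp at hm)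
  have hcoeff : ∀ j ∈ Finset.range m, ∑ c ∈ Finset.range m, ((ζ ^ c)⁻¹) ^ j =
      if j = 0 then (m : k) else 0 := by
    intro j hj
    split_ifs with hj₀
    · simp [hj₀]
    · simp_rw [← inv_pow, ← pow_mul, mul_comm _ j, pow_mul]
      exact hζ.inv.geom_sum_pow_eq_zero hj₀ (Finset.mem_range.mp hj)
  simp only [eigenProj, ← Finset.smul_sum, smul_pow]
  rw [Finset.sum_comm]
  simp only [← Finset.sum_smul]
  rw [Finset.sum_congr rfl fun j hj => by rw [hcoeff j hj],
    Finset.sum_eq_single_of_mem 0 (Finset.mem_range.mpr hm₀) fun j _ hj => by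
      rw [if_neg hj, zero_smul], if_pos rfl, pow_zero, smul_smul, inv_mul_cancel₀ hm, one_smul]

theorem commute_eigenProj {τ σ : End k V} (h : Commute τ σ) (m : ℕ) (μ : k) :
    Commute τ (eigenProj σ m μ) :=
  (Commute.sum_right _ _ _ fun j _ => (h.smul_right _).pow_right j).smul_right _

theorem iSup_iInf_eigenspace_pow_eq_top {ι : Type*} [Fintype ι] {σ : ι → End k V}
    {m : ι → ℕ} {ζ : ι → k} (hζ : ∀ i, IsPrimitiveRoot (ζ i) (m i)) (hm : ∀ i, (m i : k) ≠ 0)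
    (hcomm : Pairwise fun i j => Commute (σ i) (σ j)) (hord : ∀ i, σ i ^ m i = 1) :
    ⨆ c : ι → ℕ, ⨅ i, (σ i).eigenspace (ζ i ^ c i) = ⊤ := by
  classical
  suffices h : ∀ s : Finset ι, ⨆ c : ι → ℕ, ⨅ i ∈ s, (σ i).eigenspace (ζ i ^ c i) = ⊤ by
    simpa using h Finset.univ
  intro s
  induction s using Finset.induction_on with
  | empty => simp
  | insert j s hj ih =>
    refine eq_top_iff.mpr (ih ▸ iSup_le fun c x hx => ?_)
    rw [← one_apply (R := k) x, ← sum_eigenProj_pow_eq_one (σ := σ j) (hζ j) (hm j),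
      LinearMap.sum_apply]
    refine Submodule.sum_mem _ fun d _ => Submodule.mem_iSup_of_mem (Function.update c j d) ?_
    simp only [Submodule.mem_iInf, Finset.mem_insert, forall_eq_or_imp, Function.update_self]
    refine ⟨eigenProj_apply_mem_eigenspace (hord j) ?_ x, fun i hi => ?_⟩
    · rw [← pow_mul, mul_comm, pow_mul, (hζ j).pow_eq_one, one_pow]
    · have hij : i ≠ j := ne_of_mem_of_not_mem hi hj
      have hxi : x ∈ (σ i).eigenspace (ζ i ^ c i) := by
        simp only [Submodule.mem_iInf] at hx
        exact hx i hi
      rw [Function.update_of_ne hij]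
      exact mapsTo_genEigenspace_of_comm (commute_eigenProj (hcomm hij) (m j) (ζ j ^ d))
        (ζ i ^ c i) 1 hxi

end Module.End

namespace TensorProduct

theorem map_smul_left_of_algHom {R A B M N : Type*} [CommSemiring R] [Semiring A] [Semiring B]
    [Algebra R A] [Algebra R B] [AddCommMonoid M] [AddCommMonoid N] [Module R M] [Module R N]
    (γ : A →ₐ[R] B) (f : M →ₗ[R] N) (a : A) (x : A ⊗[R] M) :
    map γ.toLinearMap f (a • x) = γ a • map γ.toLinearMap f x := by
  induction x using TensorProduct.induction_on with
  | zero => simp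
  | tmul b y => simp [smul_tmul']
  | add x y hx hy => simp only [smul_add, map_add, hx, hy]

theorem exists_eq_sum_tmul_of_span_eq_top {R M N ι : Type*} [CommSemiring R] [AddCommMonoid M]
    [AddCommMonoid N] [Module R M] [Module R N] [Fintype ι] {b : ι → M}
    (hb : Submodule.span R (Set.range b) = ⊤) (z : M ⊗[R] N) :
    ∃ x : ι → N, z = ∑ i, b i ⊗ₜ x i := by
  let Φ : (ι → N) →ₗ[R] M ⊗[R] N := ∑ i, (mk R M N (b i)).comp (LinearMap.proj i)
  suffices LinearMap.range Φ = ⊤ by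
    obtain ⟨x, hx⟩ := LinearMap.range_eq_top.mp this z
    exact ⟨x, by simp [← hx, Φ]⟩
  rw [eq_top_iff, ← span_tmul_eq_top, Submodule.span_le]
  rintro _ ⟨y, v, rfl⟩
  obtain ⟨c, rfl⟩ :=
    Submodule.mem_span_range_iff_exists_fun R |>.mp (hb ▸ Submodule.mem_top (x := y))
  exact ⟨fun i => c i • v, by simp [Φ, sum_tmul, smul_tmul]⟩

end TensorProduct

theorem LinearMap.liftBaseChange_lie {R S L L' : Type*} [CommRing R] [CommRing S] [Algebra R S]
    [LieRing L] [LieAlgebra R L] [LieRing L'] [LieAlgebra S L'] [Module R L']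
    [IsScalarTower R S L']
    (f : L →ₗ[R] L') (hf : ∀ x y, f ⁅x, y⁆ = ⁅f x, f y⁆) (a b : S ⊗[R] L) :
    f.liftBaseChange S ⁅a, b⁆ = ⁅f.liftBaseChange S a, f.liftBaseChange S b⁆ := by
  induction a using TensorProduct.induction_on with
  | zero => simp
  | add a₁ a₂ h₁ h₂ => simp only [add_lie, map_add, h₁, h₂]
  | tmul s x =>
    induction b using TensorProduct.induction_on with
    | zero => simp
    | add b₁ b₂ h₁ h₂ => simp only [lie_add, map_add, h₁, h₂]
    | tmul t y =>
      simp only [LieAlgebra.ExtendScalars.bracket_tmul, LinearMap.liftBaseChange_tmul, hf,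
        smul_lie, lie_smul, smul_smul, mul_comm]

section LaurentPolynomial

open AddMonoidAlgebra

variable {k : Type*} [Field k] {n : ℕ} {m : Fin n → ℕ}

theorem single_expMulHom_mem_multiloopBase (q : Fin n → ℤ) :
    single (expMulHom m q) (1 : k) ∈ multiloopBase k n m :=
  (AlgHom.mem_range _).mpr ⟨single q 1, by simp⟩

variable (k m) in
noncomputable def reducedMonomial (f : ∀ i, Fin (m i)) : AddMonoidAlgebra k (Fin n → ℤ) :=
  single (fun i => (f i : ℤ)) 1

theorem exists_single_eq_smul_reducedMonomial (hm : ∀ i, m i ≠ 0) (e : Fin n → ℤ) :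
    ∃ (r : multiloopBase k n m) (f : ∀ i, Fin (m i)),
      single e (1 : k) = r • reducedMonomial k m f := by
  have hmod (i : Fin n) : 0 ≤ e i % m i ∧ e i % m i < m i :=
    ⟨Int.emod_nonneg _ (by exact_mod_cast hm i),
      Int.emod_lt_of_pos _ (by exact_mod_cast Nat.pos_of_ne_zero (hm i))⟩
  let f (i : Fin n) : Fin (m i) := ⟨(e i % m i).toNat, by have := hmod i; omega⟩
  have he : e = expMulHom m (fun i => e i / m i) + fun i => (f i : ℤ) := by
    ext i
    simp [expMulHom, f, max_eq_left (hmod i).1, Int.mul_ediv_add_emod]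
  refine ⟨⟨_, single_expMulHom_mem_multiloopBase fun i => e i / m i⟩, f, ?_⟩
  rw [Subalgebra.smul_def, smul_eq_mul, reducedMonomial, single_mul_single, mul_one, ← he]

theorem span_reducedMonomial_eq_top (hm : ∀ i, m i ≠ 0) :
    Submodule.span (multiloopBase k n m) (Set.range (reducedMonomial k m)) = ⊤ := by
  refine Submodule.eq_top_iff'.mpr fun s => ?_
  induction s using AddMonoidAlgebra.induction_linear with
  | zero => exact zero_mem _
  | add s t hs ht => exact add_mem hs ht
  | single e a =>
    obtain ⟨r, f, hf⟩ := exists_single_eq_smul_reducedMonomial (k := k) hm e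
    rw [← mul_one a, ← smul_single', hf]
    exact Submodule.smul_of_tower_mem _ a
      (Submodule.smul_mem _ r (Submodule.subset_span ⟨f, rfl⟩))

end LaurentPolynomial

theorem AddMonoidAlgebra.single_neg_mul_single_one {k G : Type*} [Semiring k] [AddGroup G]
    (e : G) : single (-e) (1 : k) * single e 1 = 1 := by
  rw [single_mul_single, neg_add_cancel, mul_one, one_def]

section Multiloop

open AddMonoidAlgebra TensorProduct

variable {k : Type*} [Field k] {n : ℕ} {m : Fin n → ℕ} {ζ : Fin n → k}
  {g : Type*} [AddCommGroup g] [Module k g] {σ : Fin n → Module.End k g}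
  {γ : Fin n → (AddMonoidAlgebra k (Fin n → ℤ) ≃ₐ[k] AddMonoidAlgebra k (Fin n → ℤ))}
  {L : Type*} [AddCommGroup L] [Module (multiloopBase k n m) L]
  {ι : L →ₗ[multiloopBase k n m] AddMonoidAlgebra k (Fin n → ℤ) ⊗[k] g}

theorem single_smul_mem_eigenspace_map
    (hγ : ∀ i (e : Fin n → ℤ), γ i (single e 1) = ζ i ^ (-(e i)) • single e 1)
    {i : Fin n} {v : AddMonoidAlgebra k (Fin n → ℤ) ⊗[k] g}
    (hv : map (γ i).toLinearMap (σ i) v = v) (e : Fin n → ℤ) :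
    single e (1 : k) • v ∈
      Module.End.eigenspace (map (γ i).toLinearMap (σ i)) (ζ i ^ (-(e i))) := by
  rw [Module.End.mem_eigenspace_iff]
  calc map (γ i).toLinearMap (σ i) (single e (1 : k) • v)
      _ = γ i (single e 1) • map (γ i).toLinearMap (σ i) v :=
        map_smul_left_of_algHom (γ i).toAlgHom (σ i) _ v
      _ = ζ i ^ (-(e i)) • single e (1 : k) • v := by rw [hv, hγ, smul_assoc]

theorem map_single_tmul_of_mem_eigenspace
    (hγ : ∀ i (e : Fin n → ℤ), γ i (single e 1) = ζ i ^ (-(e i)) • single e 1)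
    {i : Fin n} (hζ : ζ i ≠ 0) {c : ℕ} {y : g} (hy : y ∈ (σ i).eigenspace (ζ i ^ c))
    {e : Fin n → ℤ} (he : e i = c) :
    map (γ i).toLinearMap (σ i) (single e 1 ⊗ₜ y) = single e 1 ⊗ₜ y := by
  rw [map_tmul, AlgEquiv.toLinearMap_apply, hγ, he, Module.End.mem_eigenspace_iff.mp hy,
    smul_tmul_smul, zpow_neg, zpow_natCast, inv_mul_cancel₀ (pow_ne_zero c hζ), one_smul]

theorem liftBaseChange_surjective_of_fixedPoints (hζ : ∀ i, IsPrimitiveRoot (ζ i) (m i))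
    (hm : ∀ i, (m i : k) ≠ 0) (hσcomm : Pairwise fun i j => Commute (σ i) (σ j))
    (hσord : ∀ i, σ i ^ m i = 1)
    (hγ : ∀ i (e : Fin n → ℤ), γ i (single e 1) = ζ i ^ (-(e i)) • single e 1)
    (hfix : ∀ y, (∀ i, map (γ i).toLinearMap (σ i) y = y) → y ∈ LinearMap.range ι) :
    Function.Surjective (ι.liftBaseChange (AddMonoidAlgebra k (Fin n → ℤ))) := by
  have hζ₀ (i : Fin n) : ζ i ≠ 0 := (hζ i).ne_zero fun h => hm i (by rw [h, Nat.cast_zero])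
  set P := LinearMap.range (ι.liftBaseChange (AddMonoidAlgebra k (Fin n → ℤ)))
  have h_eigen (c : Fin n → ℕ) (y : g) (hy : y ∈ ⨅ i, (σ i).eigenspace (ζ i ^ c i)) :
      (1 : AddMonoidAlgebra k (Fin n → ℤ)) ⊗ₜ[k] y ∈ P := by
    let e : Fin n → ℤ := fun i => c i
    obtain ⟨l, hl⟩ := hfix (single e 1 ⊗ₜ y) fun i =>
      map_single_tmul_of_mem_eigenspace hγ (hζ₀ i) (Submodule.mem_iInf _ |>.mp hy i) rfl
    refine ⟨single (-e) 1 ⊗ₜ l, ?_⟩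
    rw [LinearMap.liftBaseChange_tmul, hl, smul_tmul', smul_eq_mul, single_neg_mul_single_one]
  have h_one_tmul (y : g) : (1 : AddMonoidAlgebra k (Fin n → ℤ)) ⊗ₜ[k] y ∈ P := by
    have hy : y ∈ ⨆ c : Fin n → ℕ, ⨅ i, (σ i).eigenspace (ζ i ^ c i) := by
      rw [Module.End.iSup_iInf_eigenspace_pow_eq_top hζ hm hσcomm hσord]
      exact Submodule.mem_top
    induction hy using Submodule.iSup_induction' with
    | mem c y hy => exact h_eigen c y hy
    | zero => rw [tmul_zero]; exact zero_mem P
    | add y y' _ _ hy hy' => rw [tmul_add]; exact add_mem hy hy'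
  refine LinearMap.range_eq_top.mp (Submodule.eq_top_iff'.mpr fun z => ?_)
  induction z using TensorProduct.induction_on with
  | zero => exact zero_mem P
  | tmul s y =>
    rw [← mul_one s, ← smul_eq_mul, ← smul_tmul']
    exact P.smul_mem s (h_one_tmul y)
  | add z z' hz hz' => exact add_mem hz hz'

theorem liftBaseChange_injective_of_fixedPoints (hζ : ∀ i, IsPrimitiveRoot (ζ i) (m i))
    (hm : ∀ i, (m i : k) ≠ 0)
    (hγ : ∀ i (e : Fin n → ℤ), γ i (single e 1) = ζ i ^ (-(e i)) • single e 1)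
    (hι : Function.Injective ι) (hfix : ∀ x i, map (γ i).toLinearMap (σ i) (ι x) = ι x) :
    Function.Injective (ι.liftBaseChange (AddMonoidAlgebra k (Fin n → ℤ))) := by
  have hm₀ (i : Fin n) : m i ≠ 0 := fun h => hm i (by rw [h, Nat.cast_zero])
  refine (injective_iff_map_eq_zero _).mpr fun z hz => ?_
  obtain ⟨x, rfl⟩ := exists_eq_sum_tmul_of_span_eq_top (span_reducedMonomial_eq_top hm₀) z
  simp only [map_sum, LinearMap.liftBaseChange_tmul] at hz
  let χ (f : ∀ i, Fin (m i)) (i : Fin n) : k := ζ i ^ (-(f i : ℤ))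
  have hχ : Function.Injective χ := fun f f' h => funext fun i => Fin.ext <|
    (hζ i).pow_inj (f i).2 (f' i).2 <| by simpa [χ] using congr_fun h i
  have hindep : iSupIndep fun χ : Fin n → k =>
      ⨅ i, Module.End.eigenspace (map (γ i).toLinearMap (σ i)) (χ i) :=
    iSupIndep.iInf _ fun i => Module.End.eigenspaces_iSupIndep _
  have hmem (f : ∀ i, Fin (m i)) : reducedMonomial k m f • ι (x f) ∈
      ⨅ i, Module.End.eigenspace (map (γ i).toLinearMap (σ i)) (χ f i) :=
    Submodule.mem_iInf _ |>.mpr fun i =>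
      single_smul_mem_eigenspace_map hγ (hfix (x f) i) (fun i => (f i : ℤ))
  have hzero := (iSupIndep_iff_finsetSum_eq_zero_imp_eq_zero _).mp (hindep.comp hχ)
    Finset.univ _ (fun f _ => hmem f) hz
  have hx (f : ∀ i, Fin (m i)) : x f = 0 := by
    have hf : single (fun i => (f i : ℤ)) (1 : k) • ι (x f) = 0 := hzero f (Finset.mem_univ f)
    apply hι
    rw [map_zero, ← one_smul (AddMonoidAlgebra k (Fin n → ℤ)) (ι (x f)),
      ← single_neg_mul_single_one (fun i => (f i : ℤ)), mul_smul, hf, smul_zero]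
  simp [hx]

end Multiloop

theorem multiloop_trivialized_by_baseChange_general
    (k : Type*) [Field k] (n : ℕ)
    (m : Fin n → ℕ) (hmk : ∀ i, ((m i : k) ≠ 0))
    (ζ : Fin n → k) (hζ : ∀ i, IsPrimitiveRoot (ζ i) (m i))
    (g : Type*) [LieRing g] [LieAlgebra k g]
    (σ : Fin n → (g ≃ₗ⁅k⁆ g))
    (hσcomm : ∀ i j (x : g), σ i (σ j x) = σ j (σ i x))
    (hσord : ∀ i (x : g), (⇑(σ i))^[m i] x = x)
    (γ : Fin n → (AddMonoidAlgebra k (Fin n → ℤ) ≃ₐ[k] AddMonoidAlgebra k (Fin n → ℤ)))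
    (hγ : ∀ i (e : Fin n → ℤ),
      γ i (AddMonoidAlgebra.single e (1 : k)) =
        (ζ i ^ (-(e i))) • AddMonoidAlgebra.single e (1 : k))
    -- the multiloop algebra `L(g, σ)`: a Lie algebra over `R = multiloopBase k n m`,
    -- identified via `ι` with the fixed points of the `γᵢ ⊗ σᵢ` in `S ⊗[k] g`
    (Lu : Type*) [LieRing Lu] [LieAlgebra ↥(multiloopBase k n m) Lu]
    (ι : Lu →ₗ[↥(multiloopBase k n m)] ((AddMonoidAlgebra k (Fin n → ℤ)) ⊗[k] g))
    (hι_inj : Function.Injective ι)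
    (hι_lie : ∀ x y : Lu, ι ⁅x, y⁆ = ⁅ι x, ι y⁆)
    (hι_range : ∀ y : (AddMonoidAlgebra k (Fin n → ℤ)) ⊗[k] g,
      (∃ x : Lu, ι x = y) ↔
        ∀ i, TensorProduct.map (γ i).toLinearMap (σ i).toLieHom.toLinearMap y = y) :
    Function.Bijective (LinearMap.liftBaseChange (AddMonoidAlgebra k (Fin n → ℤ)) ι) ∧
      ∀ a b : (AddMonoidAlgebra k (Fin n → ℤ)) ⊗[↥(multiloopBase k n m)] Lu,
        LinearMap.liftBaseChange (AddMonoidAlgebra k (Fin n → ℤ)) ι ⁅a, b⁆ =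
          ⁅LinearMap.liftBaseChange (AddMonoidAlgebra k (Fin n → ℤ)) ι a,
            LinearMap.liftBaseChange (AddMonoidAlgebra k (Fin n → ℤ)) ι b⁆ := by
  have hσcomm' : Pairwise fun i j =>
      Commute (σ i).toLieHom.toLinearMap (σ j).toLieHom.toLinearMap :=
    fun i j _ => LinearMap.ext (hσcomm i j)
  have hσord' (i : Fin n) : (σ i).toLieHom.toLinearMap ^ m i = 1 :=
    LinearMap.ext fun x => by rw [Module.End.pow_apply]; exact hσord i x
  refine ⟨⟨?_, ?_⟩, LinearMap.liftBaseChange_lie ι hι_lie⟩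
  · exact liftBaseChange_injective_of_fixedPoints hζ hmk hγ hι_inj
      fun x => (hι_range (ι x)).mp ⟨x, rfl⟩
  · exact liftBaseChange_surjective_of_fixedPoints hζ hmk hσcomm' hσord' hγ
      fun y hy => (hι_range y).mpr hy

/-- Multiloop algebras are twisted forms: with
`S = k[u₁^{±1}, …, uₙ^{±1}]`, `R = k[u₁^{±m₁}, …, uₙ^{±mₙ}]`, commuting automorphisms
`σᵢ` of `g` with `σᵢ^{mᵢ} = 1`, and `γᵢ` the `k`-algebra automorphism of `S` scaling
`uᵢ` by `ζᵢ⁻¹`, let `L(g, σ) ⊆ S ⊗[k] g` be the simultaneous fixed points of the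
`γᵢ ⊗ σᵢ` (a Lie algebra over `R`, here presented by a Lie algebra `Lu` over `R`
identified with the fixed-point set via `ι`).  Then the `S`-linear map
`L(g,σ) ⊗[R] S → g ⊗[k] S` induced by `(x, s) ↦ s • x` is an isomorphism of Lie
algebras over `S`. -/
theorem multiloop_trivialized_by_baseChange
    (k : Type*) [Field k] (n : ℕ) (hn : 1 ≤ n)
    (m : Fin n → ℕ) (hm : ∀ i, 0 < m i) (hmk : ∀ i, ((m i : k) ≠ 0))
    (ζ : Fin n → k) (hζ : ∀ i, IsPrimitiveRoot (ζ i) (m i))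
    (g : Type*) [LieRing g] [LieAlgebra k g]
    (σ : Fin n → (g ≃ₗ⁅k⁆ g))
    (hσcomm : ∀ i j (x : g), σ i (σ j x) = σ j (σ i x))
    (hσord : ∀ i (x : g), (⇑(σ i))^[m i] x = x)
    (γ : Fin n → (AddMonoidAlgebra k (Fin n → ℤ) ≃ₐ[k] AddMonoidAlgebra k (Fin n → ℤ)))
    (hγ : ∀ i (e : Fin n → ℤ),
      γ i (AddMonoidAlgebra.single e (1 : k)) =
        (ζ i ^ (-(e i))) • AddMonoidAlgebra.single e (1 : k))
    -- the multiloop algebra `L(g, σ)`: a Lie algebra over `R = multiloopBase k n m`,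
    -- identified via `ι` with the fixed points of the `γᵢ ⊗ σᵢ` in `S ⊗[k] g`
    (Lu : Type*) [LieRing Lu] [LieAlgebra ↥(multiloopBase k n m) Lu]
    (ι : Lu →ₗ[↥(multiloopBase k n m)] ((AddMonoidAlgebra k (Fin n → ℤ)) ⊗[k] g))
    (hι_inj : Function.Injective ι)
    (hι_lie : ∀ x y : Lu, ι ⁅x, y⁆ = ⁅ι x, ι y⁆)
    (hι_range : ∀ y : (AddMonoidAlgebra k (Fin n → ℤ)) ⊗[k] g,
      (∃ x : Lu, ι x = y) ↔
        ∀ i, TensorProduct.map (γ i).toLinearMap (σ i).toLieHom.toLinearMap y = y) :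
    Function.Bijective (LinearMap.liftBaseChange (AddMonoidAlgebra k (Fin n → ℤ)) ι) ∧
      ∀ a b : (AddMonoidAlgebra k (Fin n → ℤ)) ⊗[↥(multiloopBase k n m)] Lu,
        LinearMap.liftBaseChange (AddMonoidAlgebra k (Fin n → ℤ)) ι ⁅a, b⁆ =
          ⁅LinearMap.liftBaseChange (AddMonoidAlgebra k (Fin n → ℤ)) ι a,
            LinearMap.liftBaseChange (AddMonoidAlgebra k (Fin n → ℤ)) ι b⁆ :=
  multiloop_trivialized_by_baseChange_general k n m hmk ζ hζ g σ hσcomm hσord γ hγ Lu ι hι_inj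
    hι_lie hι_range
end
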